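/- arXiv:2601.08530 — 4 statements merged into one kernel-verified Lean document; each statement's English description precedes it below -/
import Mathlib

section
/- Let D be a tournament with n = 2^c players (for some c ∈ ℕ) and let v* ∈ V(D). There exists a winning seeding for v* if and only if D admits a labeled spanning binomial arborescence rooted at v*. -/
open Finset
open scoped Classical

/-- The winner of a single match between `u` and `v`: `u` if `u` beats `v`, else `v`. -/
noncomputable def fight {V : Type*} (beats : V → V → Prop) (u v : V) : V :=
  if beats u v then u else v

/-- The champion of a knockout tournament over `2 ^ c` leaves (addressed by `Fin c → Bool`),
where `f` assigns a player to each leaf.  Defined by recursion on the depth `c`. -/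
noncomputable def champ {V : Type*} (beats : V → V → Prop) :
    (c : ℕ) → ((Fin c → Bool) → V) → V
  | 0, f => f Fin.elim0
  | c + 1, f =>
      fight beats (champ beats c (fun x => f (Fin.cons false x)))
                  (champ beats c (fun x => f (Fin.cons true x)))

/-- `IsBinArb X E r` : the directed graph with vertex set `X` and arc set `E` is a
(labeled copy of an) unlabeled binomial arborescence rooted at `r`:
a single vertex is one, and joining two vertex-disjoint ones of equal size
by an arc between their roots yields one. -/
inductive IsBinArb {V : Type*} : Finset V → Finset (V × V) → V → Prop
  | single (v : V) : IsBinArb {v} ∅ v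
  | join {X Y : Finset V} {E F : Finset (V × V)} {u v : V} :
      IsBinArb X E u → IsBinArb Y F v → Disjoint X Y → X.card = Y.card →
      IsBinArb (X ∪ Y) (insert (u, v) (E ∪ F)) u


/-!
Both directions are inductions, on the number of rounds and on the arborescence. The champion
of a bracket is the winner of the final between the champions of its two half-brackets, so
gluing the binomial arborescences of the two halves along the final's arc (winner → loser) gives
one for the whole bracket. Conversely, undoing the last join of a binomial arborescence splits
the players into two halves of equal size, seeded recursively into the two half-brackets; their
roots meet in the final, which the root of the whole arborescence wins.
-/

namespace IsBinArb

variable {V : Type*} {X Y : Finset V} {E₀ E₁ : Finset (V × V)} {r₀ r₁ : V}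

theorem root_mem {E : Finset (V × V)} {r : V} (h : IsBinArb X E r) : r ∈ X := by
  induction h with
  | single v => exact mem_singleton_self v
  | join _ _ _ _ ih _ => exact mem_union_left _ ih

theorem exists_union_fight (beats : V → V → Prop)
    (htot : ∀ u v : V, u ≠ v → (beats u v ↔ ¬ beats v u))
    (h₀ : IsBinArb X E₀ r₀) (h₁ : IsBinArb Y E₁ r₁)
    (hE₀ : ∀ p ∈ E₀, beats p.1 p.2) (hE₁ : ∀ p ∈ E₁, beats p.1 p.2)
    (hXY : Disjoint X Y) (hcard : X.card = Y.card) :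
    ∃ E : Finset (V × V), (∀ p ∈ E, beats p.1 p.2) ∧
      IsBinArb (X ∪ Y) E (fight beats r₀ r₁) := by
  by_cases hb : beats r₀ r₁
  · refine ⟨insert (r₀, r₁) (E₀ ∪ E₁), ?_, ?_⟩
    · simpa only [forall_mem_insert, forall_mem_union] using ⟨hb, hE₀, hE₁⟩
    · rw [fight, if_pos hb]
      exact join h₀ h₁ hXY hcard
  · have hne : r₁ ≠ r₀ := fun h => disjoint_left.mp hXY h₀.root_mem (h ▸ h₁.root_mem)
    have hb' : beats r₁ r₀ := (htot r₁ r₀ hne).mpr hb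
    refine ⟨insert (r₁, r₀) (E₁ ∪ E₀), ?_, ?_⟩
    · simpa only [forall_mem_insert, forall_mem_union] using ⟨hb', hE₁, hE₀⟩
    · rw [fight, if_neg hb, union_comm]
      exact join h₁ h₀ hXY.symm hcard.symm

end IsBinArb

section Bracket

variable {V : Type*} {c : ℕ}

def bracketHalf (b : Bool) (f : (Fin (c + 1) → Bool) → V) : (Fin c → Bool) → V :=
  fun x => f (Fin.cons b x)

theorem champ_succ (beats : V → V → Prop) (f : (Fin (c + 1) → Bool) → V) :
    champ beats (c + 1) f =
      fight beats (champ beats c (bracketHalf false f)) (champ beats c (bracketHalf true f)) :=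
  rfl

theorem exists_bracketHalf_eq (f₀ f₁ : (Fin c → Bool) → V) :
    ∃ f : (Fin (c + 1) → Bool) → V,
      bracketHalf false f = f₀ ∧ bracketHalf true f = f₁ :=
  ⟨fun g => cond (g 0) (f₁ (Fin.tail g)) (f₀ (Fin.tail g)), by
    constructor <;> funext x <;> simp [bracketHalf]⟩

theorem image_univ_eq_bracketHalf_union (f : (Fin (c + 1) → Bool) → V) :
    univ.image f = univ.image (bracketHalf false f) ∪ univ.image (bracketHalf true f) := by
  ext v
  simp [bracketHalf, Fin.exists_fin_succ_pi]

theorem injective_iff_bracketHalf (f : (Fin (c + 1) → Bool) → V) :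
    Function.Injective f ↔ Function.Injective (bracketHalf false f) ∧
      Function.Injective (bracketHalf true f) ∧
      Disjoint (univ.image (bracketHalf false f)) (univ.image (bracketHalf true f)) := by
  simp only [Function.Injective, Fin.forall_fin_succ_pi, Bool.forall_bool, Fin.cons_inj,
    bracketHalf, disjoint_left, mem_image, mem_univ, true_and]
  grind

end Bracket

section Seeding

variable {V : Type*}

theorem exists_isBinArb_champ (beats : V → V → Prop)
    (htot : ∀ u v : V, u ≠ v → (beats u v ↔ ¬ beats v u)) :
    ∀ (c : ℕ) (f : (Fin c → Bool) → V), Function.Injective f →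
      ∃ E : Finset (V × V), (∀ p ∈ E, beats p.1 p.2) ∧
        IsBinArb (univ.image f) E (champ beats c f)
  | 0, f, _ => by
    refine ⟨∅, by simp, ?_⟩
    rw [univ_unique, image_singleton]
    exact IsBinArb.single _
  | c + 1, f, hf => by
    obtain ⟨hinj₀, hinj₁, hdisj⟩ := (injective_iff_bracketHalf f).mp hf
    obtain ⟨E₀, hE₀, h₀⟩ := exists_isBinArb_champ beats htot c _ hinj₀
    obtain ⟨E₁, hE₁, h₁⟩ := exists_isBinArb_champ beats htot c _ hinj₁
    have hcard : (univ.image (bracketHalf false f)).card =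
        (univ.image (bracketHalf true f)).card := by
      rw [card_image_of_injective _ hinj₀, card_image_of_injective _ hinj₁]
    rw [image_univ_eq_bracketHalf_union, champ_succ]
    exact h₀.exists_union_fight beats htot h₁ hE₀ hE₁ hdisj hcard

theorem IsBinArb.exists_injective_champ_eq (beats : V → V → Prop) {X : Finset V}
    {E : Finset (V × V)} {r : V} (h : IsBinArb X E r) (hE : ∀ p ∈ E, beats p.1 p.2)
    (c : ℕ) (hc : X.card = 2 ^ c) :
    ∃ f : (Fin c → Bool) → V,
      Function.Injective f ∧ univ.image f = X ∧ champ beats c f = r := by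
  induction h generalizing c with
  | single v =>
    obtain rfl : c = 0 := by simpa using hc.symm
    exact ⟨fun _ => v, Function.injective_of_subsingleton _, by simp, rfl⟩
  | @join X Y E₀ E₁ u v h₀ h₁ hXY hcard ih₀ ih₁ =>
    simp only [forall_mem_insert, forall_mem_union] at hE
    obtain ⟨huv, hE₀, hE₁⟩ := hE
    obtain ⟨c, rfl⟩ : ∃ c', c = c' + 1 := Nat.exists_eq_succ_of_ne_zero <| by
      rintro rfl
      have := card_pos.mpr ⟨u, h₀.root_mem⟩
      rw [card_union_of_disjoint hXY] at hc
      omega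
    have hX : X.card = 2 ^ c := by
      rw [card_union_of_disjoint hXY, pow_succ] at hc
      omega
    obtain ⟨f₀, hinj₀, himg₀, hch₀⟩ := ih₀ hE₀ c hX
    obtain ⟨f₁, hinj₁, himg₁, hch₁⟩ := ih₁ hE₁ c (hcard ▸ hX)
    obtain ⟨f, rfl, rfl⟩ := exists_bracketHalf_eq f₀ f₁
    refine ⟨f, ?_, ?_, ?_⟩
    · exact (injective_iff_bracketHalf f).mpr ⟨hinj₀, hinj₁, himg₀ ▸ himg₁ ▸ hXY⟩
    · rw [image_univ_eq_bracketHalf_union, himg₀, himg₁]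
    · rw [champ_succ, hch₀, hch₁, fight, if_pos huv]

end Seeding

theorem stmt0_general {V : Type*} [Fintype V] (beats : V → V → Prop)
    (htot : ∀ u v : V, u ≠ v → (beats u v ↔ ¬ beats v u))
    (c : ℕ) (hcard : Fintype.card V = 2 ^ c) (vstar : V) :
    (∃ f : (Fin c → Bool) → V, Function.Bijective f ∧ champ beats c f = vstar) ↔
      (∃ E : Finset (V × V), (∀ p ∈ E, beats p.1 p.2) ∧ IsBinArb Finset.univ E vstar) := by
  constructor
  · rintro ⟨f, hf, rfl⟩
    rw [← image_univ_of_surjective hf.2]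
    exact exists_isBinArb_champ beats htot c f hf.1
  · rintro ⟨E, hE, h⟩
    obtain ⟨f, hf, -, hch⟩ := h.exists_injective_champ_eq beats hE c (by rw [card_univ, hcard])
    refine ⟨f, (Fintype.bijective_iff_injective_and_card f).mpr ⟨hf, ?_⟩, hch⟩
    simp [hcard]

/-- in a tournament with `n = 2 ^ c` players, there is a winning seeding for
`vstar` iff the tournament admits a labeled spanning binomial arborescence rooted at `vstar`. -/
theorem stmt0 {V : Type*} [Fintype V] (beats : V → V → Prop)
    (hirr : ∀ v, ¬ beats v v)
    (htot : ∀ u v : V, u ≠ v → (beats u v ↔ ¬ beats v u))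
    (c : ℕ) (hcard : Fintype.card V = 2 ^ c) (vstar : V) :
    (∃ f : (Fin c → Bool) → V, Function.Bijective f ∧ champ beats c f = vstar) ↔
      (∃ E : Finset (V × V), (∀ p ∈ E, beats p.1 p.2) ∧ IsBinArb Finset.univ E vstar) :=
  stmt0_general beats htot c hcard vstar
end

section
/- Let D be a tournament with n = 2^c players, let v* ∈ V(D), and let k = |N_in(v*)| < log₂ n. If there exists a winning seeding for v*, then there exists a nice winning seeding for v*. -/
open Finset
open scoped Classical

/-- The player who, under the seeding `f`, survives the first `r` rounds at the internal
node of the complete binary tree addressed by `y` (the first `c - r` coordinates). -/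
noncomputable def subChamp {V : Type*} (beats : V → V → Prop) (c r : ℕ) (h : r ≤ c)
    (f : (Fin c → Bool) → V) (y : Fin (c - r) → Bool) : V :=
  champ beats r (fun x => f (fun i => Fin.append y x (Fin.cast (Nat.sub_add_cancel h).symm i)))

/-- `remaining beats c f r h` is the set `C_r` of players still remaining after round `r`
of the knockout tournament with seeding `f` (so `C_0` is the set of all players). -/
noncomputable def remaining {V : Type*} (beats : V → V → Prop) (c : ℕ)
    (f : (Fin c → Bool) → V) (r : ℕ) (h : r ≤ c) : Set V :=
  Set.range (subChamp beats c r h f)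

/-- Round `r` (`1 ≤ r ≤ c`) is nice under the seeding `f` for the favorite `vstar`:
either some in-neighbor of `vstar` is eliminated in round `r`
(`|L_r ∩ N_in(v*)| > 0`), or no in-neighbor of `vstar` entered round `r`
(`|C_{r-1} ∩ N_in(v*)| = 0`). -/
noncomputable def NiceRound {V : Type*} (beats : V → V → Prop) (vstar : V) (c : ℕ)
    (f : (Fin c → Bool) → V) (r : ℕ) (h1 : 1 ≤ r) (h : r ≤ c) : Prop :=
  (((remaining beats c f (r - 1) (le_trans (Nat.sub_le r 1) h) \ remaining beats c f r h) ∩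
      {u | beats u vstar}).Nonempty) ∨
    (remaining beats c f (r - 1) (le_trans (Nat.sub_le r 1) h) ∩ {u | beats u vstar}) = ∅

/-- A seeding is nice if all rounds are nice. -/
noncomputable def NiceSeeding {V : Type*} (beats : V → V → Prop) (vstar : V) (c : ℕ)
    (f : (Fin c → Bool) → V) : Prop :=
  ∀ (r : ℕ) (h1 : 1 ≤ r) (h : r ≤ c), NiceRound beats vstar c f r h1 h

/-!
For an injective seeding whose champion lies outside a set `Y`, the players can be reseeded so
that the champion stays outside `Y` and every round eliminates a member of `Y` while one is
left. By induction on the number of rounds: first make a member of `Y` lose in round one (if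
none does, all of `Y` survives round one; recursively arrange this among the winners and put the
round-one losers, none of them in `Y`, in the other half), then reseed the round-one winners
recursively and reorder the round-one matches accordingly.

For the theorem, split a winning seeding for `v*` into halves. The half won by `v*` is made nice
by induction; the champion of the other half is beaten by `v*`, so it is not in `N_in(v*)` and
the statement above applies to that half with `Y = N_in(v*)`. In the final round only `v*` and
that champion remain, and neither is an in-neighbour of `v*`.
-/

open Function

section Knockout

variable {V : Type*} (beats : V → V → Prop)

lemma fight_eq_or_eq (u v : V) : fight beats u v = u ∨ fight beats u v = v := by
  unfold fight; split_ifs <;> simp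

lemma champ_mem_range : ∀ (c : ℕ) (f : (Fin c → Bool) → V), champ beats c f ∈ Set.range f
  | 0, f => ⟨_, rfl⟩
  | c + 1, f => by
    rcases fight_eq_or_eq beats (champ beats c fun x => f (Fin.cons false x))
      (champ beats c fun x => f (Fin.cons true x)) with h | h <;>
      rw [champ, h] <;> exact Set.range_comp_subset_range _ f (champ_mem_range c _)

lemma champ_ne_champ_of_disjoint {c c' : ℕ} {g₀ : (Fin c → Bool) → V} {g₁ : (Fin c' → Bool) → V}
    (hd : Disjoint (Set.range g₀) (Set.range g₁)) : champ beats c g₀ ≠ champ beats c' g₁ :=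
  fun h => Set.disjoint_left.1 hd (champ_mem_range beats c g₀) (h ▸ champ_mem_range beats c' g₁)

/-- The seeding of the second round: the winner of the first-round match at the
leaves `Fin.snoc x false`, `Fin.snoc x true` moves to the leaf `x`. -/
noncomputable def roundWinners (c : ℕ) (f : (Fin (c + 1) → Bool) → V) : (Fin c → Bool) → V :=
  fun x => fight beats (f (Fin.snoc x false)) (f (Fin.snoc x true))

lemma range_roundWinners_subset (c : ℕ) (f : (Fin (c + 1) → Bool) → V) :
    Set.range (roundWinners beats c f) ⊆ Set.range f := by
  rintro _ ⟨x, rfl⟩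
  rcases fight_eq_or_eq beats (f (Fin.snoc x false)) (f (Fin.snoc x true)) with h | h <;>
    exact ⟨_, h.symm⟩

def joinHalves {c : ℕ} (g₀ g₁ : (Fin c → Bool) → V) : (Fin (c + 1) → Bool) → V :=
  fun z => bif z 0 then g₁ (Fin.tail z) else g₀ (Fin.tail z)

variable {beats}

@[simp]
lemma joinHalves_cons {c : ℕ} (g₀ g₁ : (Fin c → Bool) → V) (b : Bool) (x : Fin c → Bool) :
    joinHalves g₀ g₁ (Fin.cons b x) = bif b then g₁ x else g₀ x := by
  simp [joinHalves]

lemma joinHalves_halves {c : ℕ} (f : (Fin (c + 1) → Bool) → V) :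
    joinHalves (fun x => f (Fin.cons false x)) (fun x => f (Fin.cons true x)) = f := by
  funext z
  rw [← Fin.cons_self_tail z]
  cases z 0 <;> simp

lemma exists_joinHalves_eq {c : ℕ} (f : (Fin (c + 1) → Bool) → V) :
    ∃ g₀ g₁, joinHalves g₀ g₁ = f :=
  ⟨_, _, joinHalves_halves f⟩

lemma champ_joinHalves {c : ℕ} (g₀ g₁ : (Fin c → Bool) → V) :
    champ beats (c + 1) (joinHalves g₀ g₁) = fight beats (champ beats c g₀) (champ beats c g₁) := by
  simp [champ]

lemma range_joinHalves {c : ℕ} (g₀ g₁ : (Fin c → Bool) → V) :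
    Set.range (joinHalves g₀ g₁) = Set.range g₀ ∪ Set.range g₁ := by
  ext v
  constructor
  · rintro ⟨z, rfl⟩
    rw [← Fin.cons_self_tail z]
    cases z 0 <;> simp
  · rintro (⟨x, rfl⟩ | ⟨x, rfl⟩)
    exacts [⟨Fin.cons false x, by simp⟩, ⟨Fin.cons true x, by simp⟩]

lemma injective_joinHalves_iff {c : ℕ} {g₀ g₁ : (Fin c → Bool) → V} :
    Injective (joinHalves g₀ g₁) ↔
      Injective g₀ ∧ Injective g₁ ∧ Disjoint (Set.range g₀) (Set.range g₁) := by
  constructor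
  · intro h
    refine ⟨fun x y hxy => ?_, fun x y hxy => ?_, Set.disjoint_left.2 ?_⟩
    · simpa using @h (Fin.cons false x) (Fin.cons false y) (by simpa using hxy)
    · simpa using @h (Fin.cons true x) (Fin.cons true y) (by simpa using hxy)
    · rintro _ ⟨x, rfl⟩ ⟨y, hyx⟩
      simpa using @h (Fin.cons true y) (Fin.cons false x) (by simpa using hyx)
  · rintro ⟨h₀, h₁, hd⟩ z w hzw
    have eq_of_tail_eq (h0 : z 0 = w 0) (ht : Fin.tail z = Fin.tail w) : z = w := by
      rw [← Fin.cons_self_tail z, ← Fin.cons_self_tail w, h0, ht]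
    simp only [joinHalves] at hzw
    cases hz : z 0 <;> cases hw : w 0 <;> simp only [hz, hw, cond_false, cond_true] at hzw
    · exact eq_of_tail_eq (hz.trans hw.symm) (h₀ hzw)
    · exact (Set.disjoint_left.1 hd ⟨_, hzw⟩ ⟨_, rfl⟩).elim
    · exact (Set.disjoint_left.1 hd ⟨_, hzw.symm⟩ ⟨_, rfl⟩).elim
    · exact eq_of_tail_eq (hz.trans hw.symm) (h₁ hzw)

lemma roundWinners_joinHalves {c : ℕ} (g₀ g₁ : (Fin (c + 1) → Bool) → V) :
    roundWinners beats (c + 1) (joinHalves g₀ g₁) =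
      joinHalves (roundWinners beats c g₀) (roundWinners beats c g₁) := by
  funext z
  rw [← Fin.cons_self_tail z]
  cases z 0 <;> simp [roundWinners, ← Fin.cons_snoc_eq_snoc_cons]

lemma champ_roundWinners : ∀ (c : ℕ) (f : (Fin (c + 1) → Bool) → V),
    champ beats c (roundWinners beats c f) = champ beats (c + 1) f
  | 0, f => by
    have hsnoc (b : Bool) : (Fin.snoc Fin.elim0 b : Fin 1 → Bool) = Fin.cons b Fin.elim0 := by
      funext i; fin_cases i; rfl
    simp [champ, roundWinners, hsnoc]
  | c + 1, f => by
    obtain ⟨g₀, g₁, rfl⟩ := exists_joinHalves_eq f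
    rw [roundWinners_joinHalves, champ_joinHalves, champ_joinHalves, champ_roundWinners,
      champ_roundWinners]

end Knockout

lemma Fin.append_snoc_cast {α : Type*} {m m' r n : ℕ} (y : Fin m → α) (x : Fin r → α) (b : α)
    (hm : m' = m) (h : m + (r + 1) = n + 1) (h' : m' + r = n) :
    (fun i => Fin.append y (Fin.snoc x b) (Fin.cast h.symm i)) =
      Fin.snoc (fun i => Fin.append (fun j => y (Fin.cast hm j)) x (Fin.cast h'.symm i)) b := by
  subst hm h'
  rw [Fin.append_snoc]
  rfl

section Remaining

variable {V : Type*} {beats : V → V → Prop}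

lemma remaining_zero (c : ℕ) (f : (Fin c → Bool) → V) :
    remaining beats c f 0 c.zero_le = Set.range f := by
  ext v
  constructor
  · rintro ⟨y, rfl⟩
    exact ⟨_, rfl⟩
  · rintro ⟨z, rfl⟩
    refine ⟨fun i => z (Fin.cast (Nat.sub_zero c) i), ?_⟩
    simp [subChamp, champ]

lemma remaining_succ (c r : ℕ) (h : r + 1 ≤ c + 1) (f : (Fin (c + 1) → Bool) → V) :
    remaining beats (c + 1) f (r + 1) h =
      remaining beats c (roundWinners beats c f) r (Nat.le_of_succ_le_succ h) := by
  have hm : c - r = c + 1 - (r + 1) := by omega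
  have subChamp_succ (y : Fin (c + 1 - (r + 1)) → Bool) :
      subChamp beats (c + 1) (r + 1) h f y =
        subChamp beats c r (Nat.le_of_succ_le_succ h) (roundWinners beats c f)
          (fun j => y (Fin.cast hm j)) := by
    rw [subChamp, subChamp, ← champ_roundWinners]
    congr 1
    funext x
    have h' : c - r + r = c := Nat.sub_add_cancel (Nat.le_of_succ_le_succ h)
    rw [roundWinners, roundWinners, Fin.append_snoc_cast _ _ _ hm (Nat.sub_add_cancel h) h',
      Fin.append_snoc_cast _ _ _ hm (Nat.sub_add_cancel h) h']
  ext v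
  constructor
  · rintro ⟨y, rfl⟩
    exact ⟨_, (subChamp_succ y).symm⟩
  · rintro ⟨y, rfl⟩
    refine ⟨fun j => y (Fin.cast hm.symm j), ?_⟩
    simp [subChamp_succ]

lemma remaining_subset_range : ∀ (c r : ℕ) (h : r ≤ c) (f : (Fin c → Bool) → V),
    remaining beats c f r h ⊆ Set.range f
  | c, 0, _, f => (remaining_zero c f).subset
  | c + 1, r + 1, h, f => by
    rw [remaining_succ]
    exact (remaining_subset_range c r _ _).trans (range_roundWinners_subset beats c f)

lemma remaining_self : ∀ (c : ℕ) (f : (Fin c → Bool) → V),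
    remaining beats c f c le_rfl = {champ beats c f}
  | 0, f => by
    rw [remaining_zero, Set.range_unique]
    rfl
  | c + 1, f => by
    rw [remaining_succ, remaining_self, champ_roundWinners]

lemma remaining_joinHalves : ∀ (c r : ℕ) (h : r ≤ c) (g₀ g₁ : (Fin c → Bool) → V),
    remaining beats (c + 1) (joinHalves g₀ g₁) r (h.trans c.le_succ) =
      remaining beats c g₀ r h ∪ remaining beats c g₁ r h
  | c, 0, _, g₀, g₁ => by
    rw [remaining_zero, remaining_zero, remaining_zero, range_joinHalves]
  | c + 1, r + 1, h, g₀, g₁ => by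
    rw [remaining_succ, remaining_succ, remaining_succ, roundWinners_joinHalves,
      remaining_joinHalves c r]

end Remaining

section Nice

variable {V : Type*} (beats : V → V → Prop)

/-- `NiceSeeding` with `N_in(v*)` replaced by an arbitrary set `Y` and rounds counted from `0`. -/
def NiceFor (Y : Set V) (c : ℕ) (f : (Fin c → Bool) → V) : Prop :=
  ∀ (r : ℕ) (h : r < c),
    ((remaining beats c f r h.le \ remaining beats c f (r + 1) h) ∩ Y).Nonempty ∨
      remaining beats c f r h.le ∩ Y = ∅

variable {beats} {Y : Set V}

lemma niceFor_of_disjoint {c : ℕ} {f : (Fin c → Bool) → V} (hY : Disjoint (Set.range f) Y) :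
    NiceFor beats Y c f :=
  fun _ _ => Or.inr (hY.mono_left (remaining_subset_range ..)).inter_eq

lemma NiceFor.of_roundWinners {c : ℕ} {f : (Fin (c + 1) → Bool) → V}
    (hkill : ((Set.range f \ Set.range (roundWinners beats c f)) ∩ Y).Nonempty)
    (hnice : NiceFor beats Y c (roundWinners beats c f)) : NiceFor beats Y (c + 1) f
  | 0, _ => by
    left
    rwa [remaining_zero, remaining_succ, remaining_zero]
  | r + 1, h => by
    rw [remaining_succ, remaining_succ]
    exact hnice r (Nat.lt_of_succ_lt_succ h)

lemma NiceFor.joinHalves {c : ℕ} {g₀ g₁ : (Fin c → Bool) → V}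
    (hd : Disjoint (Set.range g₀) (Set.range g₁))
    (h₀ : NiceFor beats Y c g₀) (h₁ : NiceFor beats Y c g₁)
    (hc₀ : champ beats c g₀ ∉ Y) (hc₁ : champ beats c g₁ ∉ Y) :
    NiceFor beats Y (c + 1) (joinHalves g₀ g₁) := by
  intro r hr
  rcases Nat.lt_succ_iff_lt_or_eq.1 hr with hr | rfl
  · have kill_union {A₀ A₁ B₀ B₁ : Set V} (hB : Disjoint A₀ B₁) :
        ((A₀ \ B₀) ∩ Y).Nonempty → (((A₀ ∪ A₁) \ (B₀ ∪ B₁)) ∩ Y).Nonempty := by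
      rintro ⟨y, ⟨hyA, hyB⟩, hyY⟩
      exact ⟨y, ⟨Or.inl hyA, fun hy => hy.elim hyB (Set.disjoint_left.1 hB hyA)⟩, hyY⟩
    rw [remaining_joinHalves c r hr.le, remaining_joinHalves c (r + 1) hr]
    rcases h₀ r hr with hk₀ | he₀
    · exact Or.inl (kill_union (hd.mono (remaining_subset_range ..) (remaining_subset_range ..)) hk₀)
    rcases h₁ r hr with hk₁ | he₁
    · rw [Set.union_comm (remaining beats c g₀ r _), Set.union_comm (remaining beats c g₀ _ _)]
      exact Or.inl
        (kill_union (hd.symm.mono (remaining_subset_range ..) (remaining_subset_range ..)) hk₁)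
    · exact Or.inr (by rw [Set.union_inter_distrib_right, he₀, he₁, Set.union_empty])
  · right
    rw [remaining_joinHalves r r le_rfl, remaining_self, remaining_self]
    ext v
    simp only [Set.mem_inter_iff, Set.mem_union, Set.mem_singleton_iff, Set.mem_empty_iff_false,
      iff_false, not_and]
    rintro (rfl | rfl) <;> assumption

end Nice

section SnocSelect

variable {V : Type*} {c : ℕ}

lemma injective_snoc_select {f : (Fin (c + 1) → Bool) → V} (hf : Injective f) (s : (Fin c → Bool) → Bool) :
    Injective fun x => f (Fin.snoc x (s x)) :=
  fun _ _ h => (Fin.snoc_injective2 (hf h)).1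

lemma disjoint_range_snoc_select {f : (Fin (c + 1) → Bool) → V} (hf : Injective f) (s : (Fin c → Bool) → Bool) :
    Disjoint (Set.range fun x => f (Fin.snoc x (s x)))
      (Set.range fun x => f (Fin.snoc x (!s x))) := by
  refine Set.disjoint_left.2 ?_
  rintro _ ⟨x, rfl⟩ ⟨y, hy⟩
  obtain ⟨rfl, hs⟩ := Fin.snoc_injective2 (hf hy)
  simp at hs

lemma range_snoc_select_union (f : (Fin (c + 1) → Bool) → V) (s : (Fin c → Bool) → Bool) :
    (Set.range fun x => f (Fin.snoc x (s x))) ∪ (Set.range fun x => f (Fin.snoc x (!s x))) =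
      Set.range f := by
  refine subset_antisymm
    (Set.union_subset (Set.range_comp_subset_range _ f) (Set.range_comp_subset_range _ f)) ?_
  rintro _ ⟨z, rfl⟩
  rw [← Fin.snoc_init_self z]
  by_cases h : s (Fin.init z) = z (Fin.last c)
  · exact Or.inl ⟨Fin.init z, by dsimp only; rw [h]⟩
  · exact Or.inr ⟨Fin.init z, by dsimp only; rw [Bool.not_eq.2 h]⟩

end SnocSelect

section FirstRound

variable {V : Type*} (beats : V → V → Prop)

noncomputable def winnerSide (c : ℕ) (f : (Fin (c + 1) → Bool) → V) (x : Fin c → Bool) : Bool :=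
  !decide (beats (f (Fin.snoc x false)) (f (Fin.snoc x true)))

noncomputable def roundLosers (c : ℕ) (f : (Fin (c + 1) → Bool) → V) : (Fin c → Bool) → V :=
  fun x => f (Fin.snoc x (!winnerSide beats c f x))

lemma roundWinners_eq (c : ℕ) (f : (Fin (c + 1) → Bool) → V) :
    roundWinners beats c f = fun x => f (Fin.snoc x (winnerSide beats c f x)) := by
  funext x
  by_cases h : beats (f (Fin.snoc x false)) (f (Fin.snoc x true)) <;>
    simp [roundWinners, winnerSide, fight, h]

variable {beats} {c : ℕ} {f : (Fin (c + 1) → Bool) → V}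

lemma injective_roundWinners (hf : Injective f) : Injective (roundWinners beats c f) := by
  rw [roundWinners_eq]
  exact injective_snoc_select hf _

lemma injective_roundLosers (hf : Injective f) : Injective (roundLosers beats c f) :=
  injective_snoc_select hf _

lemma disjoint_range_roundWinners_roundLosers (hf : Injective f) :
    Disjoint (Set.range (roundWinners beats c f)) (Set.range (roundLosers beats c f)) := by
  rw [roundWinners_eq]
  exact disjoint_range_snoc_select hf _

lemma range_roundWinners_union_roundLosers :
    Set.range (roundWinners beats c f) ∪ Set.range (roundLosers beats c f) = Set.range f := by
  rw [roundWinners_eq]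
  exact range_snoc_select_union f _

lemma exists_reseeding_roundWinners_eq (hf : Injective f) {g : (Fin c → Bool) → V}
    (hg : Injective g) (hgr : Set.range g = Set.range (roundWinners beats c f)) :
    ∃ f' : (Fin (c + 1) → Bool) → V,
      Injective f' ∧ Set.range f' = Set.range f ∧ roundWinners beats c f' = g := by
  have hW := injective_roundWinners (beats := beats) hf
  -- permute the first-round matches by the `σ` with `roundWinners f ∘ σ = g`
  let σ : Equiv.Perm (Fin c → Bool) :=
    (Equiv.ofInjective g hg).trans ((Equiv.setCongr hgr).trans (Equiv.ofInjective _ hW).symm)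
  let τ : Equiv.Perm (Fin (c + 1) → Bool) :=
    (Fin.snocEquiv fun _ => Bool).symm.trans
      ((Equiv.prodCongr (Equiv.refl _) σ).trans (Fin.snocEquiv fun _ => Bool))
  refine ⟨f ∘ τ, hf.comp τ.injective, τ.surjective.range_comp f, funext fun x => ?_⟩
  have hσ : roundWinners beats c f (σ x) = g x := Equiv.apply_ofInjective_symm hW _
  simpa [τ, roundWinners, Fin.snocEquiv] using hσ

end FirstRound

section Reseeding

variable {V : Type*} {beats : V → V → Prop}

theorem exists_reseeding_eliminating_in_first_round {Y : Set V} :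
    ∀ (c : ℕ) (f : (Fin (c + 1) → Bool) → V), Injective f → champ beats (c + 1) f ∉ Y →
      (Set.range f ∩ Y).Nonempty →
      ∃ f' : (Fin (c + 1) → Bool) → V, Injective f' ∧ Set.range f' = Set.range f ∧
        champ beats (c + 1) f' ∉ Y ∧
        ((Set.range f' \ Set.range (roundWinners beats c f')) ∩ Y).Nonempty
  | 0, f, hf, hchamp, ⟨y, hyf, hyY⟩ => by
    refine ⟨f, hf, rfl, hchamp, y, ⟨hyf, ?_⟩, hyY⟩
    rintro ⟨x, rfl⟩
    rw [← champ_roundWinners] at hchamp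
    rw [Subsingleton.elim x Fin.elim0] at hyY
    exact hchamp hyY
  | c + 1, f, hf, hchamp, hY => by
    by_cases hkill : ((Set.range f \ Set.range (roundWinners beats (c + 1) f)) ∩ Y).Nonempty
    · exact ⟨f, hf, rfl, hchamp, hkill⟩
    have hYW : Set.range f ∩ Y ⊆ Set.range (roundWinners beats (c + 1) f) :=
      fun y ⟨hyf, hyY⟩ => by_contra fun hyW => hkill ⟨y, ⟨hyf, hyW⟩, hyY⟩
    have hWL := disjoint_range_roundWinners_roundLosers (beats := beats) hf
    have hLY : Disjoint (Set.range (roundLosers beats (c + 1) f)) Y := by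
      refine Set.disjoint_left.2 fun y hyL hyY => Set.disjoint_left.1 hWL ?_ hyL
      rw [← range_roundWinners_union_roundLosers (f := f)] at hYW
      exact hYW ⟨Or.inr hyL, hyY⟩
    obtain ⟨g, hg, hgr, hgchamp, y, ⟨hyg, hygW⟩, hyY⟩ :=
      exists_reseeding_eliminating_in_first_round c (roundWinners beats (c + 1) f)
        (injective_roundWinners hf) (by rwa [champ_roundWinners])
        (hY.mono (Set.subset_inter hYW Set.inter_subset_right))
    -- every member of `Y` survives round one, so the round-one losers (none in `Y`) can
    -- fill the second half without affecting `Y`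
    refine ⟨joinHalves g (roundLosers beats (c + 1) f),
      injective_joinHalves_iff.2 ⟨hg, injective_roundLosers hf, hgr ▸ hWL⟩,
      by rw [range_joinHalves, hgr, range_roundWinners_union_roundLosers], ?_, y, ⟨?_, ?_⟩, hyY⟩
    · rw [champ_joinHalves]
      rcases fight_eq_or_eq beats (champ beats (c + 1) g)
        (champ beats (c + 1) (roundLosers beats (c + 1) f)) with h | h <;> rw [h]
      · exact hgchamp
      · exact Set.disjoint_left.1 hLY (champ_mem_range ..)
    · rw [range_joinHalves]
      exact Or.inl hyg
    · rw [roundWinners_joinHalves, range_joinHalves]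
      rintro (hy | hy)
      · exact hygW hy
      · exact Set.disjoint_left.1 hLY (range_roundWinners_subset beats _ _ hy) hyY

theorem exists_niceFor_reseeding {Y : Set V} :
    ∀ (c : ℕ) (f : (Fin c → Bool) → V), Injective f → champ beats c f ∉ Y →
      ∃ f' : (Fin c → Bool) → V, Injective f' ∧ Set.range f' = Set.range f ∧
        champ beats c f' ∉ Y ∧ NiceFor beats Y c f'
  | 0, f, hf, hchamp => ⟨f, hf, rfl, hchamp, fun r h => absurd h r.not_lt_zero⟩
  | c + 1, f, hf, hchamp => by
    by_cases hY : Disjoint (Set.range f) Y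
    · exact ⟨f, hf, rfl, hchamp, niceFor_of_disjoint hY⟩
    obtain ⟨f₁, hf₁, hr₁, hchamp₁, hkill₁⟩ := exists_reseeding_eliminating_in_first_round c f hf
      hchamp (Set.not_disjoint_iff_nonempty_inter.1 hY)
    obtain ⟨g, hg, hgr, hgchamp, hgnice⟩ := exists_niceFor_reseeding c
      (roundWinners beats c f₁) (injective_roundWinners hf₁) (by rwa [champ_roundWinners])
    obtain ⟨f₂, hf₂, hr₂, hW₂⟩ := exists_reseeding_roundWinners_eq hf₁ hg hgr
    refine ⟨f₂, hf₂, hr₂.trans hr₁, by rwa [← champ_roundWinners, hW₂], ?_⟩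
    refine NiceFor.of_roundWinners ?_ (hW₂ ▸ hgnice)
    rwa [hr₂, hW₂, hgr]

end Reseeding

section Tournament

variable {V : Type*} {beats : V → V → Prop}

lemma fight_eq_left_iff (htot : ∀ u v : V, u ≠ v → (beats u v ↔ ¬ beats v u)) {u v : V}
    (h : u ≠ v) : fight beats u v = u ↔ ¬ beats v u := by
  by_cases huv : beats u v
  · simp [fight, huv, (htot u v h).1 huv]
  · simp [fight, huv, h.symm, (htot v u h.symm).2 huv]

lemma fight_comm (htot : ∀ u v : V, u ≠ v → (beats u v ↔ ¬ beats v u)) {u v : V}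
    (h : u ≠ v) : fight beats u v = fight beats v u := by
  by_cases huv : beats u v
  · simp [fight, huv, (htot u v h).1 huv]
  · simp [fight, huv, (htot v u h.symm).2 huv]

theorem exists_niceFor_inNeighbors_reseeding
    (htot : ∀ u v : V, u ≠ v → (beats u v ↔ ¬ beats v u)) (hirr : ∀ v, ¬ beats v v) :
    ∀ (c : ℕ) (f : (Fin c → Bool) → V) (w : V), Injective f → champ beats c f = w →
      ∃ f' : (Fin c → Bool) → V, Injective f' ∧ Set.range f' = Set.range f ∧
        champ beats c f' = w ∧ NiceFor beats {u | beats u w} c f'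
  | 0, f, _, hf, hw => ⟨f, hf, rfl, hw, fun r h => absurd h r.not_lt_zero⟩
  | c + 1, f, w, hf, hw => by
    obtain ⟨g₀, g₁, rfl⟩ := exists_joinHalves_eq f
    obtain ⟨hg₀, hg₁, hd⟩ := injective_joinHalves_iff.1 hf
    have hne := champ_ne_champ_of_disjoint beats hd
    rw [champ_joinHalves] at hw
    wlog hw₀ : champ beats c g₀ = w generalizing g₀ g₁
    · have hw₁ : champ beats c g₁ = w :=
        ((fight_eq_or_eq beats _ _).resolve_left fun h => hw₀ (h.symm.trans hw)).symm.trans hw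
      obtain ⟨f', hf', hr, hchamp, hnice⟩ := this g₁ g₀
        (injective_joinHalves_iff.2 ⟨hg₁, hg₀, hd.symm⟩) (by rwa [fight_comm htot hne.symm])
        hg₁ hg₀ hd.symm hne.symm hw₁
      refine ⟨f', hf', ?_, hchamp, hnice⟩
      rw [hr, range_joinHalves, range_joinHalves, Set.union_comm]
    subst hw₀
    have hg₁w : champ beats c g₁ ∉ {u | beats u (champ beats c g₀)} :=
      (fight_eq_left_iff htot hne).1 hw
    obtain ⟨g₀', hg₀', hr₀, hchamp₀, hnice₀⟩ :=
      exists_niceFor_inNeighbors_reseeding htot hirr c g₀ _ hg₀ rfl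
    obtain ⟨g₁', hg₁', hr₁, hchamp₁, hnice₁⟩ := exists_niceFor_reseeding c g₁ hg₁ hg₁w
    have hd' : Disjoint (Set.range g₀') (Set.range g₁') := hr₀ ▸ hr₁ ▸ hd
    have hne' := champ_ne_champ_of_disjoint beats hd'
    refine ⟨joinHalves g₀' g₁', injective_joinHalves_iff.2 ⟨hg₀', hg₁', hd'⟩,
      by rw [range_joinHalves, range_joinHalves, hr₀, hr₁], ?_,
      hnice₀.joinHalves hd' hnice₁ (hchamp₀ ▸ hirr _) hchamp₁⟩
    rw [champ_joinHalves, ← hchamp₀, fight_eq_left_iff htot hne']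
    rwa [hchamp₀]

end Tournament

theorem stmt5_general {V : Type*} (beats : V → V → Prop)
    (hirr : ∀ v, ¬ beats v v)
    (htot : ∀ u v : V, u ≠ v → (beats u v ↔ ¬ beats v u))
    (c : ℕ) (vstar : V)
    (hwin : ∃ f : (Fin c → Bool) → V, Function.Bijective f ∧ champ beats c f = vstar) :
    ∃ f : (Fin c → Bool) → V, Function.Bijective f ∧ champ beats c f = vstar ∧
      NiceSeeding beats vstar c f := by
  obtain ⟨f, hf, hchamp⟩ := hwin
  obtain ⟨f', hf', hr, hchamp', hnice⟩ :=
    exists_niceFor_inNeighbors_reseeding htot hirr c f vstar hf.injective hchamp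
  refine ⟨f', ⟨hf', ?_⟩, hchamp', fun r h1 h => ?_⟩
  · rw [← Set.range_eq_univ, hr, Set.range_eq_univ]
    exact hf.surjective
  · obtain ⟨r, rfl⟩ := Nat.exists_eq_add_of_le' h1
    exact hnice r h

/-- if `vstar` has fewer than `log₂ n` in-neighbors and some winning seeding
for `vstar` exists, then a *nice* winning seeding for `vstar` exists. -/
theorem stmt5 {V : Type*} [Fintype V] (beats : V → V → Prop)
    (hirr : ∀ v, ¬ beats v v)
    (htot : ∀ u v : V, u ≠ v → (beats u v ↔ ¬ beats v u))
    (c : ℕ) (hcard : Fintype.card V = 2 ^ c) (vstar : V)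
    (k : ℕ) (hk : k = (Finset.univ.filter (fun u => beats u vstar)).card)
    (hkc : k < c)
    (hwin : ∃ f : (Fin c → Bool) → V, Function.Bijective f ∧ champ beats c f = vstar) :
    ∃ f : (Fin c → Bool) → V, Function.Bijective f ∧ champ beats c f = vstar ∧
      NiceSeeding beats vstar c f :=
  stmt5_general beats hirr htot c vstar hwin
end

section
/- Let D be a tournament and v* ∈ V(D). For every arc set S ⊆ A(D) such that reversing the arcs of S yields a digraph in which v* lies on no directed cycle, there exists a vertex set X ⊆ V(D) ∖ {v*} with |X| ≤ |S| such that deleting X from D yields a digraph in which v* lies on no directed cycle. Consequently, the subset feedback vertex set number of (D, v*) is at most the subset feedback arc set number of (D, v*). -/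
open Finset
open scoped Classical

/-- The digraph obtained from `beats` by reversing the arcs in the set `S`. -/
def revArcs {V : Type*} (beats : V → V → Prop) (S : Finset (V × V)) (u v : V) : Prop :=
  (beats u v ∧ (u, v) ∉ S) ∨ (v, u) ∈ S

/-- `vstar` lies on no directed cycle of the digraph `R`: no vertex reachable from
`vstar` has an arc back to `vstar`. -/
def VstarAcyclic {V : Type*} (R : V → V → Prop) (vstar : V) : Prop :=
  ∀ u : V, Relation.ReflTransGen R vstar u → ¬ R u vstar

/-- The subset feedback arc set number of `(D, vstar)`: the minimum number of arcs of the
tournament whose reversal yields a digraph in which `vstar` lies on no directed cycle. -/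
noncomputable def subsetFasNum {V : Type*} (beats : V → V → Prop) (vstar : V) : ℕ :=
  sInf {m : ℕ | ∃ S : Finset (V × V), (∀ p ∈ S, beats p.1 p.2) ∧ S.card = m ∧
    VstarAcyclic (revArcs beats S) vstar}

/-- The digraph obtained from `beats` by deleting the vertices in `X`. -/
def delVerts {V : Type*} (beats : V → V → Prop) (X : Finset V) (u v : V) : Prop :=
  beats u v ∧ u ∉ X ∧ v ∉ X

/-- The subset feedback vertex set number of `(D, vstar)`: the minimum size of a vertex set
`X ⊆ V(D) \ {vstar}` whose deletion yields a digraph in which `vstar` lies on no directed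
cycle. -/
noncomputable def subsetFvsNum {V : Type*} (beats : V → V → Prop) (vstar : V) : ℕ :=
  sInf {m : ℕ | ∃ X : Finset V, vstar ∉ X ∧ X.card = m ∧
    VstarAcyclic (delVerts beats X) vstar}

/-!
For each reversed arc, delete its endpoint other than `v*` (its tail, unless the tail is `v*`).
Every arc of `D - X` then has no endpoint in `X`, so it is not a reversed arc; hence `D - X` is
a subdigraph of `D` with `S` reversed, and `v*` lies on no cycle of it. Applying this to a
minimum `S` gives the inequality; a minimum exists because reversing all arcs into `v*`
makes `v*` a source.
-/

section SubsetFeedback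

variable {V : Type*}

theorem VstarAcyclic.mono {R R' : V → V → Prop} {vstar : V} (hR : VstarAcyclic R vstar)
    (h : ∀ u v, R' u v → R u v) : VstarAcyclic R' vstar :=
  fun u hu hback => hR u (Relation.ReflTransGen.mono h _ _ hu) (h u vstar hback)

theorem VstarAcyclic.not_rel_self {R : V → V → Prop} {vstar : V} (hR : VstarAcyclic R vstar) :
    ¬ R vstar vstar :=
  hR vstar Relation.ReflTransGen.refl

/-- The endpoint of the arc `p` that is deleted in place of reversing `p`. -/
def endpointAwayFrom [DecidableEq V] (vstar : V) (p : V × V) : V :=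
  if p.1 = vstar then p.2 else p.1

section ArcsToVertices

variable {beats : V → V → Prop} {S : Finset (V × V)} {vstar : V}

theorem endpointAwayFrom_ne (hS : VstarAcyclic (revArcs beats S) vstar) {p : V × V}
    (hp : p ∈ S) : endpointAwayFrom vstar p ≠ vstar := by
  obtain ⟨u, v⟩ := p
  by_cases hu : u = vstar
  · subst hu
    intro hv
    simp only [endpointAwayFrom, if_pos] at hv
    exact hS.not_rel_self (Or.inr (hv ▸ hp))
  · simp [endpointAwayFrom, hu]

theorem revArcs_of_delVerts_image_endpointAwayFrom {u v : V}
    (h : delVerts beats (S.image (endpointAwayFrom vstar)) u v) : revArcs beats S u v := by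
  obtain ⟨huv, hu, hv⟩ := h
  refine Or.inl ⟨huv, fun hmem => ?_⟩
  have hX := mem_image_of_mem (endpointAwayFrom vstar) hmem
  by_cases h : u = vstar
  · exact hv (by simpa [endpointAwayFrom, h] using hX)
  · exact hu (by simpa [endpointAwayFrom, h] using hX)

theorem exists_delVerts_of_revArcs (hS : VstarAcyclic (revArcs beats S) vstar) :
    ∃ X : Finset V, vstar ∉ X ∧ X.card ≤ S.card ∧ VstarAcyclic (delVerts beats X) vstar := by
  refine ⟨S.image (endpointAwayFrom vstar), ?_, card_image_le, ?_⟩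
  · simp only [mem_image, not_exists, not_and]
    exact fun p hp => endpointAwayFrom_ne hS hp
  · exact hS.mono fun u v => revArcs_of_delVerts_image_endpointAwayFrom

end ArcsToVertices

theorem vstarAcyclic_revArcs_arcsInto [Fintype V] {beats : V → V → Prop}
    (hirr : ∀ v, ¬ beats v v) (vstar : V) :
    VstarAcyclic (revArcs beats (univ.filter fun p : V × V => beats p.1 p.2 ∧ p.2 = vstar))
      vstar := by
  rintro u - (⟨hu, hnot⟩ | hrev)
  · exact hnot (by simpa using hu)
  · obtain ⟨hb, hu⟩ := (mem_filter.1 hrev).2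
    exact hirr vstar (hu ▸ hb)

end SubsetFeedback

theorem stmt14_general {V : Type*} [Fintype V] (beats : V → V → Prop)
    (hirr : ∀ v, ¬ beats v v)
    (vstar : V) :
    (∀ S : Finset (V × V), (∀ p ∈ S, beats p.1 p.2) →
      VstarAcyclic (revArcs beats S) vstar →
      ∃ X : Finset V, vstar ∉ X ∧ X.card ≤ S.card ∧
        VstarAcyclic (delVerts beats X) vstar) ∧
    subsetFvsNum beats vstar ≤ subsetFasNum beats vstar := by
  refine ⟨fun S _ hS => exists_delVerts_of_revArcs hS, ?_⟩
  have hne : {m : ℕ | ∃ S : Finset (V × V), (∀ p ∈ S, beats p.1 p.2) ∧ S.card = m ∧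
      VstarAcyclic (revArcs beats S) vstar}.Nonempty :=
    ⟨_, _, fun p hp => (mem_filter.1 hp).2.1, rfl, vstarAcyclic_revArcs_arcsInto hirr vstar⟩
  obtain ⟨S, -, hcard, hS⟩ := Nat.sInf_mem hne
  obtain ⟨X, hXv, hXS, hX⟩ := exists_delVerts_of_revArcs hS
  calc subsetFvsNum beats vstar ≤ X.card := Nat.sInf_le ⟨X, hXv, rfl, hX⟩
    _ ≤ S.card := hXS
    _ = subsetFasNum beats vstar := hcard

/-- for every arc set `S` of the tournament whose reversal yields a digraph
in which `vstar` lies on no directed cycle, there is a vertex set `X ⊆ V(D) \ {vstar}`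
with `|X| ≤ |S|` whose deletion yields a digraph in which `vstar` lies on no directed
cycle.  Consequently, the subset feedback vertex set number of `(D, vstar)` is at most the
subset feedback arc set number of `(D, vstar)`. -/
theorem stmt14 {V : Type*} [Fintype V] (beats : V → V → Prop)
    (hirr : ∀ v, ¬ beats v v)
    (htot : ∀ u v : V, u ≠ v → (beats u v ↔ ¬ beats v u))
    (vstar : V) :
    (∀ S : Finset (V × V), (∀ p ∈ S, beats p.1 p.2) →
      VstarAcyclic (revArcs beats S) vstar →
      ∃ X : Finset V, vstar ∉ X ∧ X.card ≤ S.card ∧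
        VstarAcyclic (delVerts beats X) vstar) ∧
    subsetFvsNum beats vstar ≤ subsetFasNum beats vstar :=
  stmt14_general beats hirr vstar
end

section
/- Let D be a tournament with n = 2^c players, let v* ∈ V(D), and let 0 ≤ s ≤ c. Suppose V(D) is partitioned into n / 2^s pairwise disjoint sets, each of size 2^s, and for each part there is a labeled binomial arborescence of D spanning that part, such that every root lies in N_out(v*) ∪ {v*} and exactly one of the roots equals v*. Then D admits a labeled spanning binomial arborescence rooted at v* (and hence there exists a winning seeding for v*). -/
/-!
Pair the parts up and let the two roots of each pair play: the winner's arborescence absorbs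
the loser's, giving an LBA of twice the size rooted at the winner. Since `vstar` beats every
other root, it wins its match, and every surviving root is still `vstar` or beaten by `vstar`;
after `c - s` rounds a single LBA spanning `V(D)` and rooted at `vstar` remains. Seeding the
bracket along a binomial arborescence makes every match an arc, won by its tail, so the root
is the champion.
-/

open Finset
open scoped Classical

open Function

section

variable {V : Type*} (beats : V → V → Prop)

def IsLabeledArb (X : Finset V) (E : Finset (V × V)) (r : V) : Prop :=
  IsBinArb X E r ∧ ∀ p ∈ E, beats p.1 p.2

structure IsDominatedArbFamily {ι : Type*} (w : V) (t : ℕ)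
    (X : ι → Finset V) (E : ι → Finset (V × V)) (u : ι → V) : Prop where
  disjoint : Pairwise (Disjoint on X)
  card_eq : ∀ i, (X i).card = 2 ^ t
  labeledArb : ∀ i, IsLabeledArb beats (X i) (E i) (u i)
  root_dominated : ∀ i, u i = w ∨ beats w (u i)
  existsUnique_root : ∃! i, u i = w

lemma IsBinArb.root_mem_s15 {X : Finset V} {E : Finset (V × V)} {r : V}
    (h : IsBinArb X E r) : r ∈ X := by
  induction h with
  | single v => exact mem_singleton_self v
  | join _ _ _ _ ih _ => exact mem_union_left _ ih

variable {beats}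

lemma IsLabeledArb.join {X Y : Finset V} {E F : Finset (V × V)} {u v : V}
    (hX : IsLabeledArb beats X E u) (hY : IsLabeledArb beats Y F v) (hXY : Disjoint X Y)
    (hcard : X.card = Y.card) (huv : beats u v) :
    IsLabeledArb beats (X ∪ Y) (insert (u, v) (E ∪ F)) u := by
  refine ⟨hX.1.join hY.1 hXY hcard, ?_⟩
  simp only [mem_insert, mem_union]
  rintro p (rfl | hp | hp)
  exacts [huv, hX.2 p hp, hY.2 p hp]

lemma IsLabeledArb.exists_seeding {X : Finset V} {E : Finset (V × V)} {r : V}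
    (h : IsLabeledArb beats X E r) {c : ℕ} (hX : X.card = 2 ^ c) :
    ∃ f : (Fin c → Bool) → V, Injective f ∧ Set.range f = X ∧ champ beats c f = r := by
  obtain ⟨h, harcs⟩ := h
  induction h generalizing c with
  | single v =>
    obtain rfl : c = 0 := by simpa using hX.symm
    exact ⟨fun _ => v, fun _ _ _ => Subsingleton.elim _ _, by simp, rfl⟩
  | @join X Y E F u v hXa hYa hXY hcard ihX ihY =>
    have hXY_card : 2 * X.card = 2 ^ c := by
      rw [← hX, card_union_of_disjoint hXY, hcard, two_mul]
    obtain ⟨c, rfl⟩ : ∃ c', c = c' + 1 := by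
      refine Nat.exists_eq_add_one.2 (Nat.pos_of_ne_zero ?_)
      rintro rfl
      omega
    have hXc : X.card = 2 ^ c := by rw [pow_succ] at hXY_card; omega
    obtain ⟨f, hf, hfX, hfu⟩ := ihX hXc fun p hp => harcs p (by simp [hp])
    obtain ⟨g, hg, hgY, hgv⟩ := ihY (hcard ▸ hXc) fun p hp => harcs p (by simp [hp])
    have hfg : ∀ a b, f a ≠ g b := fun a b hab =>
      disjoint_left.1 hXY
        (by rw [← mem_coe, ← hfX]; exact ⟨a, rfl⟩)
        (by rw [← mem_coe, ← hgY, hab]; exact ⟨b, rfl⟩)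
    let e := (Fin.consEquiv fun _ => Bool).symm.trans (Equiv.boolProdEquivSum (Fin c → Bool))
    refine ⟨Sum.elim f g ∘ e, (hf.sumElim hg hfg).comp e.injective, ?_, ?_⟩
    · rw [EquivLike.range_comp, Set.Sum.elim_range, hfX, hgY, coe_union]
    · have huv : beats u v := harcs _ (mem_insert_self _ _)
      have hleft : (fun x => (Sum.elim f g ∘ e) (Fin.cons false x)) = f := by ext; simp [e]
      have hright : (fun x => (Sum.elim f g ∘ e) (Fin.cons true x)) = g := by ext; simp [e]
      rw [champ, hleft, hright, hfu, hgv, fight, if_pos huv]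

lemma fight_eq_or (a b : V) : fight beats a b = a ∨ fight beats a b = b := by
  unfold fight
  split_ifs <;> simp

lemma fight_eq_iff_of_dominated (htot : ∀ u v : V, u ≠ v → (beats u v ↔ ¬ beats v u))
    {a b w : V} (hab : a ≠ b) (ha : a = w ∨ beats w a) (hb : b = w ∨ beats w b) :
    fight beats a b = w ↔ a = w ∨ b = w := by
  constructor
  · rintro rfl
    exact (fight_eq_or a b).imp Eq.symm Eq.symm
  · rintro (rfl | rfl)
    · rw [fight, if_pos (hb.resolve_left hab.symm)]
    · rw [fight, if_neg fun h => (htot a b hab).1 h (ha.resolve_left hab)]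

lemma IsLabeledArb.exists_union_fight (htot : ∀ u v : V, u ≠ v → (beats u v ↔ ¬ beats v u))
    {X Y : Finset V} {E F : Finset (V × V)} {u v : V}
    (hX : IsLabeledArb beats X E u) (hY : IsLabeledArb beats Y F v) (hXY : Disjoint X Y)
    (hcard : X.card = Y.card) : ∃ G, IsLabeledArb beats (X ∪ Y) G (fight beats u v) := by
  by_cases huv : beats u v
  · rw [fight, if_pos huv]
    exact ⟨_, hX.join hY hXY hcard huv⟩
  · have hvu : v ≠ u := fun h => disjoint_left.1 hXY hX.1.root_mem_s15 (h ▸ hY.1.root_mem_s15)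
    rw [fight, if_neg huv, union_comm]
    exact ⟨_, hY.join hX hXY.symm hcard.symm ((htot v u hvu).2 huv)⟩

namespace IsDominatedArbFamily

variable {ι κ : Type*} {w : V} {t : ℕ}
  {X : ι → Finset V} {E : ι → Finset (V × V)} {u : ι → V}

lemma root_injective (h : IsDominatedArbFamily beats w t X E u) : Injective u :=
  fun i j hij => by_contra fun hne =>
    disjoint_left.1 (h.disjoint hne) (h.labeledArb i).1.root_mem_s15
      (hij ▸ (h.labeledArb j).1.root_mem_s15)

lemma comp_equiv (h : IsDominatedArbFamily beats w t X E u) (e : κ ≃ ι) :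
    IsDominatedArbFamily beats w t (X ∘ e) (E ∘ e) (u ∘ e) where
  disjoint _ _ hij := h.disjoint (e.injective.ne hij)
  card_eq i := h.card_eq (e i)
  labeledArb i := h.labeledArb (e i)
  root_dominated i := h.root_dominated (e i)
  existsUnique_root := (e.existsUnique_congr fun _ => Iff.rfl).2 h.existsUnique_root

lemma exists_merge_pairs [Fintype ι] (htot : ∀ u v : V, u ≠ v → (beats u v ↔ ¬ beats v u))
    {X : ι × Bool → Finset V} {E : ι × Bool → Finset (V × V)} {u : ι × Bool → V}
    (h : IsDominatedArbFamily beats w t X E u) :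
    ∃ (X' : ι → Finset V) (E' : ι → Finset (V × V)) (u' : ι → V),
      IsDominatedArbFamily beats w (t + 1) X' E' u' ∧ univ.biUnion X' = univ.biUnion X := by
  have hpair : ∀ i, Disjoint (X (i, false)) (X (i, true)) := fun i => h.disjoint (by simp)
  choose E' hE' using fun i => (h.labeledArb (i, false)).exists_union_fight htot
    (h.labeledArb (i, true)) (hpair i) (by rw [h.card_eq, h.card_eq])
  have hwin (i : ι) : fight beats (u (i, false)) (u (i, true)) = w ↔ ∃ b, u (i, b) = w := by
    rw [fight_eq_iff_of_dominated htot (h.root_injective.ne (by simp)) (h.root_dominated _)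
      (h.root_dominated _), Bool.exists_bool]
  refine ⟨fun i => X (i, false) ∪ X (i, true), E',
    fun i => fight beats (u (i, false)) (u (i, true)),
    ⟨fun i j hij => ?_, fun i => ?_, hE', fun i => ?_, ?_⟩, ?_⟩
  · simp only [onFun, disjoint_union_left, disjoint_union_right]
    refine ⟨⟨?_, ?_⟩, ?_, ?_⟩ <;> exact h.disjoint (by simp [hij])
  · rw [card_union_of_disjoint (hpair i), h.card_eq, h.card_eq, pow_succ, mul_two]
  · rcases fight_eq_or (beats := beats) (u (i, false)) (u (i, true)) with hi | hi <;> rw [hi]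
    exacts [h.root_dominated _, h.root_dominated _]
  · obtain ⟨⟨i₀, b₀⟩, hi₀, huniq⟩ := h.existsUnique_root
    refine ⟨i₀, (hwin i₀).2 ⟨b₀, hi₀⟩, fun i hi => ?_⟩
    obtain ⟨b, hb⟩ := (hwin i).1 hi
    exact congrArg Prod.fst (huniq (i, b) hb)
  · ext a
    simp [Prod.exists, Bool.exists_bool]

lemma exists_isLabeledArb_biUnion (htot : ∀ u v : V, u ≠ v → (beats u v ↔ ¬ beats v u))
    {k : ℕ} [Fintype ι] (hι : Fintype.card ι = 2 ^ k)
    (h : IsDominatedArbFamily beats w t X E u) :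
    ∃ F, IsLabeledArb beats (univ.biUnion X) F w := by
  induction k generalizing ι t with
  | zero =>
    obtain ⟨i, hi, -⟩ := h.existsUnique_root
    rw [univ_eq_singleton_of_card_one i hι, singleton_biUnion, ← hi]
    exact ⟨E i, h.labeledArb i⟩
  | succ k ih =>
    let e : ι ≃ ULift.{_, 0} (Fin (2 ^ k)) × Bool :=
      Fintype.equivOfCardEq (by simp [hι, pow_succ])
    obtain ⟨X', E', u', h', hX'⟩ := (h.comp_equiv e.symm).exists_merge_pairs htot
    have hX : univ.biUnion X = univ.biUnion (X ∘ e.symm) := by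
      ext a
      simp only [mem_biUnion, mem_univ, true_and, comp_apply]
      exact e.symm.surjective.exists
    rw [hX, ← hX']
    exact ih (by simp) h'

end IsDominatedArbFamily

end

theorem stmt15_general {V : Type*} [Fintype V] (beats : V → V → Prop)
    (htot : ∀ u v : V, u ≠ v → (beats u v ↔ ¬ beats v u))
    (c : ℕ) (hcard : Fintype.card V = 2 ^ c) (vstar : V)
    (s : ℕ)
    (X : Fin (2 ^ (c - s)) → Finset V)
    (E : Fin (2 ^ (c - s)) → Finset (V × V))
    (u : Fin (2 ^ (c - s)) → V)
    (hdisj : ∀ i j, i ≠ j → Disjoint (X i) (X j))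
    (hcover : Finset.univ.biUnion X = Finset.univ)
    (hsize : ∀ i, (X i).card = 2 ^ s)
    (harb : ∀ i, IsBinArb (X i) (E i) (u i))
    (harcs : ∀ i, ∀ p ∈ E i, beats p.1 p.2)
    (hroots : ∀ i, u i = vstar ∨ beats vstar (u i))
    (huniq : ∃! i, u i = vstar) :
    (∃ E' : Finset (V × V), (∀ p ∈ E', beats p.1 p.2) ∧
      IsBinArb Finset.univ E' vstar) ∧
    (∃ f : (Fin c → Bool) → V, Function.Bijective f ∧ champ beats c f = vstar) := by
  have hfamily : IsDominatedArbFamily beats vstar s X E u :=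
    ⟨hdisj, hsize, fun i => ⟨harb i, harcs i⟩, hroots, huniq⟩
  obtain ⟨F, hF⟩ := hfamily.exists_isLabeledArb_biUnion htot (Fintype.card_fin _)
  rw [hcover] at hF
  obtain ⟨f, hf, hrange, hchamp⟩ := hF.exists_seeding (by rw [card_univ, hcard])
  have hsurj : Surjective f := Set.range_eq_univ.1 (by rw [hrange, coe_univ])
  exact ⟨⟨F, hF.2, hF.1⟩, f, ⟨hf, hsurj⟩, hchamp⟩

/-- let `D` be a tournament with `n = 2 ^ c` players, `vstar ∈ V(D)` and
`0 ≤ s ≤ c`.  Suppose `V(D)` is partitioned into `n / 2 ^ s = 2 ^ (c - s)` pairwise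
disjoint sets `X i`, each of size `2 ^ s`, each carrying a labeled binomial arborescence
`(X i, E i)` of `D` rooted at `u i`, such that every root lies in
`N_out(vstar) ∪ {vstar}` and exactly one root equals `vstar`.  Then `D` admits a labeled
spanning binomial arborescence rooted at `vstar`, and hence there is a winning seeding for
`vstar`. -/
theorem stmt15 {V : Type*} [Fintype V] (beats : V → V → Prop)
    (hirr : ∀ v, ¬ beats v v)
    (htot : ∀ u v : V, u ≠ v → (beats u v ↔ ¬ beats v u))
    (c : ℕ) (hcard : Fintype.card V = 2 ^ c) (vstar : V)
    (s : ℕ) (hs : s ≤ c)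
    (X : Fin (2 ^ (c - s)) → Finset V)
    (E : Fin (2 ^ (c - s)) → Finset (V × V))
    (u : Fin (2 ^ (c - s)) → V)
    (hdisj : ∀ i j, i ≠ j → Disjoint (X i) (X j))
    (hcover : Finset.univ.biUnion X = Finset.univ)
    (hsize : ∀ i, (X i).card = 2 ^ s)
    (harb : ∀ i, IsBinArb (X i) (E i) (u i))
    (harcs : ∀ i, ∀ p ∈ E i, beats p.1 p.2)
    (hroots : ∀ i, u i = vstar ∨ beats vstar (u i))
    (huniq : ∃! i, u i = vstar) :
    (∃ E' : Finset (V × V), (∀ p ∈ E', beats p.1 p.2) ∧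
      IsBinArb Finset.univ E' vstar) ∧
    (∃ f : (Fin c → Bool) → V, Function.Bijective f ∧ champ beats c f = vstar) :=
  stmt15_general beats htot c hcard vstar s X E u hdisj hcover hsize harb harcs hroots huniq
end
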